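/- arXiv:cs/0010008 — 3 statements merged into one kernel-verified Lean document; each statement's English description precedes it below -/
import Mathlib

section
/- The ordering ≺₁ is a subrelation of the ordering ≺₀: for all terms s, t over the signature, if s ≺₁ t then s ≺₀ t. -/
/-- Terms over variables `V`, constructors `C` (constants and unary symbols),
and defined function symbols `D` (arity given by the argument list). -/
inductive Tm (V C D : Type) : Type where
  | var : V → Tm V C D
  | cnst : C → Tm V C D
  | succ : C → Tm V C D → Tm V C D
  | fn : D → List (Tm V C D) → Tm V C D

/-- A default term, used for list indexing. -/
def dflt {V C D : Type} [Inhabited C] : Tm V C D := .cnst default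

/-- Strict precedence induced by the pre-order `precLe` on `D`. -/
def precLt {D : Type} (precLe : D → D → Prop) (g f : D) : Prop :=
  precLe g f ∧ ¬ precLe f g

/-- Equivalence induced by the pre-order `precLe` on `D`. -/
def eqD {D : Type} (precLe : D → D → Prop) (g f : D) : Prop :=
  precLe g f ∧ precLe f g

/-- `Below precLe f s` : the term `s` lies in `T(C ∪ D↾f, V)`, i.e. every
defined symbol occurring in `s` is strictly below `f` in the precedence. -/
inductive Below {V C D : Type} (precLe : D → D → Prop) (f : D) :
    Tm V C D → Prop where
  | var (x : V) : Below precLe f (.var x)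
  | cnst (b : C) : Below precLe f (.cnst b)
  | succ (c : C) {t : Tm V C D} : Below precLe f t → Below precLe f (.succ c t)
  | fn {g : D} {ts : List (Tm V C D)} : precLt precLe g f →
      (∀ t ∈ ts, Below precLe f t) → Below precLe f (.fn g ts)

/-- The ordering `≺₁`, with precedence `precLe` on `D` and valencies `nu`
(`nu f i = true` meaning `ν(f,i) = 1`).  Clauses (paired constructors realise
`⪯₁ = ≺₁ ∪ =`): (1) if `s ⪯₁ t` and `c ∈ C` then `s ≺₁ c(t)`; (2) if `c ∈ C`
and `s ≺₁ f(t⃗)` then `c(s) ≺₁ f(t⃗)`; (3) if `s ⪯₁ tᵢ` and `ν(f,i)=1` then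
`s ≺₁ f(…,tᵢ,…)`; (4) if `g ≺_D f` and `sᵢ ≺₁ f(t⃗)` for all `i` then
`g(s⃗) ≺₁ f(t⃗)`. -/
inductive Lt1 {V C D : Type} [Inhabited C] (precLe : D → D → Prop)
    (nu : D → ℕ → Bool) : Tm V C D → Tm V C D → Prop where
  | succ_eq (c : C) (t : Tm V C D) : Lt1 precLe nu t (.succ c t)
  | succ_lt (c : C) {s t : Tm V C D} :
      Lt1 precLe nu s t → Lt1 precLe nu s (.succ c t)
  | cons_left (c : C) {s : Tm V C D} {f : D} {ts : List (Tm V C D)} :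
      Lt1 precLe nu s (.fn f ts) → Lt1 precLe nu (.succ c s) (.fn f ts)
  | arg_eq (f : D) (ts : List (Tm V C D)) (i : ℕ) :
      i < ts.length → nu f i = true → Lt1 precLe nu (ts.getD i dflt) (.fn f ts)
  | arg_lt (f : D) (ts : List (Tm V C D)) (i : ℕ) {s : Tm V C D} :
      i < ts.length → nu f i = true → Lt1 precLe nu s (ts.getD i dflt) →
      Lt1 precLe nu s (.fn f ts)
  | prec {g f : D} {ss ts : List (Tm V C D)} : precLt precLe g f →
      (∀ s ∈ ss, Lt1 precLe nu s (.fn f ts)) →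
      Lt1 precLe nu (.fn g ss) (.fn f ts)

/-- The ordering `≺₀` of the light lexicographic path ordering.  Clauses
(paired constructors realise `⪯₀ = ≺₀ ∪ =`): (1) if `s ⪯₀ t` and
`f ∈ C ∪ D` then `s ≺₀ f(…,t,…)`; (2) if `c ∈ C` and `s ≺₀ f(t⃗)` then
`c(s) ≺₀ f(t⃗)`; (3) if `g ≺_D f` and `sᵢ ≺_{ν(g,i)} f(t⃗)` for all `i`, then
`g(s⃗) ≺₀ f(t⃗)`; (4) if `g ≈_D f`, `s₁ = t₁, …, s_{p-1} = t_{p-1}`,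
`s_p ≺₁ t_p` with `ν(f,p)=1`, and for all later positions `j` either
`s_j ⪯₁ t_j` with `ν(f,j)=1`, or `s_j ∈ T(C ∪ D↾f, V)`, `s_j ≺₀ f(t⃗)` and
`ν(f,j)=0`, then `g(s⃗) ≺₀ f(t⃗)`. -/
inductive Lt0 {V C D : Type} [Inhabited C] (precLe : D → D → Prop)
    (nu : D → ℕ → Bool) : Tm V C D → Tm V C D → Prop where
  | succ_eq (c : C) (t : Tm V C D) : Lt0 precLe nu t (.succ c t)
  | succ_lt (c : C) {s t : Tm V C D} :
      Lt0 precLe nu s t → Lt0 precLe nu s (.succ c t)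
  | arg_eq (f : D) (ts : List (Tm V C D)) (i : ℕ) :
      i < ts.length → Lt0 precLe nu (ts.getD i dflt) (.fn f ts)
  | arg_lt (f : D) (ts : List (Tm V C D)) (i : ℕ) {s : Tm V C D} :
      i < ts.length → Lt0 precLe nu s (ts.getD i dflt) →
      Lt0 precLe nu s (.fn f ts)
  | cons_left (c : C) {s : Tm V C D} {f : D} {ts : List (Tm V C D)} :
      Lt0 precLe nu s (.fn f ts) → Lt0 precLe nu (.succ c s) (.fn f ts)
  | prec {g f : D} {ss ts : List (Tm V C D)} : precLt precLe g f →
      (∀ i, i < ss.length → nu g i = true →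
        Lt1 precLe nu (ss.getD i dflt) (.fn f ts)) →
      (∀ i, i < ss.length → nu g i = false →
        Lt0 precLe nu (ss.getD i dflt) (.fn f ts)) →
      Lt0 precLe nu (.fn g ss) (.fn f ts)
  | lex {g f : D} {ss ts : List (Tm V C D)} (p : ℕ) : eqD precLe g f →
      ss.length = ts.length → p < ts.length → nu f p = true →
      (∀ i, i < p → ss.getD i dflt = ts.getD i dflt) →
      Lt1 precLe nu (ss.getD p dflt) (ts.getD p dflt) →
      (∀ j, p < j → j < ts.length → nu f j = true →
        ss.getD j dflt = ts.getD j dflt ∨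
          Lt1 precLe nu (ss.getD j dflt) (ts.getD j dflt)) →
      (∀ j, p < j → j < ts.length → nu f j = false →
        Below precLe f (ss.getD j dflt)) →
      (∀ j, p < j → j < ts.length → nu f j = false →
        Lt0 precLe nu (ss.getD j dflt) (.fn f ts)) →
      Lt0 precLe nu (.fn g ss) (.fn f ts)

theorem List.getD_mem_of_lt_length {α : Type*} {l : List α} {i : ℕ} (d : α)
    (hi : i < l.length) : l.getD i d ∈ l := by
  rw [List.getD_eq_getElem _ _ hi]
  exact List.getElem_mem hi

theorem stmt_8_general {V C D : Type} [Inhabited C] (precLe : D → D → Prop)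
    (nu : D → ℕ → Bool) (s t : Tm V C D) (h : Lt1 precLe nu s t) :
    Lt0 precLe nu s t := by
  induction h with
  | succ_eq c t => exact .succ_eq c t
  | succ_lt c _ ih => exact .succ_lt c ih
  | cons_left c _ ih => exact .cons_left c ih
  | arg_eq f ts i hi _ => exact .arg_eq f ts i hi
  | arg_lt f ts i hi _ _ ih => exact .arg_lt f ts i hi ih
  | prec hlt hargs ih =>
    -- ≺₁-smaller arguments serve clause (3) of ≺₀ whatever their valency.
    exact .prec hlt (fun i hi _ => hargs _ (List.getD_mem_of_lt_length _ hi))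
      (fun i hi _ => ih _ (List.getD_mem_of_lt_length _ hi))

/-- The ordering `≺₁` is a subrelation of `≺₀`: if `s ≺₁ t` then `s ≺₀ t`
(with `precLe` a total pre-order on `D`). -/
theorem stmt_8 {V C D : Type} [Inhabited C] (precLe : D → D → Prop)
    (htrans : Transitive precLe) (htot : ∀ f g, precLe f g ∨ precLe g f)
    (nu : D → ℕ → Bool) (s t : Tm V C D) (h : Lt1 precLe nu s t) :
    Lt0 precLe nu s t :=
  stmt_8_general precLe nu s t h
end

section
/- The ordering ≺₀ is a subrelation of the lexicographic path ordering ≺_lpo induced by the same precedence: for all terms s, t, if s ≺₀ t then s ≺_lpo t. -/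
/-- The standard lexicographic path ordering `≺_lpo` induced by the same
precedence (constructors are mutually incomparable and strictly below every
defined symbol): (i) subterm clause; (ii) if `g ≺ f` and each `sᵢ ≺_lpo f(t⃗)`
then `g(s⃗) ≺_lpo f(t⃗)`; (iii) if `g ≈ f`, `s₁ = t₁, …, s_{p-1} = t_{p-1}`,
`s_p ≺_lpo t_p`, and `s_j ≺_lpo f(t⃗)` for `j > p`, then `g(s⃗) ≺_lpo f(t⃗)`. -/
inductive Lpo {V C D : Type} [Inhabited C] (precLe : D → D → Prop) :
    Tm V C D → Tm V C D → Prop where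
  | succ_eq (c : C) (t : Tm V C D) : Lpo precLe t (.succ c t)
  | succ_lt (c : C) {s t : Tm V C D} :
      Lpo precLe s t → Lpo precLe s (.succ c t)
  | arg_eq (f : D) (ts : List (Tm V C D)) {s : Tm V C D} :
      s ∈ ts → Lpo precLe s (.fn f ts)
  | arg_lt (f : D) (ts : List (Tm V C D)) {s t' : Tm V C D} :
      t' ∈ ts → Lpo precLe s t' → Lpo precLe s (.fn f ts)
  | cnst_below (b : C) (f : D) (ts : List (Tm V C D)) :
      Lpo precLe (.cnst b) (.fn f ts)
  | succ_below (c : C) {s : Tm V C D} {f : D} {ts : List (Tm V C D)} :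
      Lpo precLe s (.fn f ts) → Lpo precLe (.succ c s) (.fn f ts)
  | succ_lex (c : C) {s t : Tm V C D} :
      Lpo precLe s t → Lpo precLe (.succ c s) (.succ c t)
  | prec {g f : D} {ss ts : List (Tm V C D)} : precLt precLe g f →
      (∀ s ∈ ss, Lpo precLe s (.fn f ts)) →
      Lpo precLe (.fn g ss) (.fn f ts)
  | lex {g f : D} {ss ts : List (Tm V C D)} (p : ℕ) : eqD precLe g f →
      ss.length = ts.length → p < ts.length →
      (∀ i, i < p → ss.getD i dflt = ts.getD i dflt) →
      Lpo precLe (ss.getD p dflt) (ts.getD p dflt) →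
      (∀ j, p < j → j < ts.length → Lpo precLe (ss.getD j dflt) (.fn f ts)) →
      Lpo precLe (.fn g ss) (.fn f ts)

/-! Forgetting valencies, every clause of `≺₁` and `≺₀` is an instance of a clause of `≺_lpo`.
The only clause needing thought is the lexicographic one: a later argument `s_j` with
`s_j ⪯₁ t_j` lies below `f(t⃗)` by the subterm clause, and one with `ν(f,j) = 0` is below
`f(t⃗)` by induction, which is exactly the side condition of the LPO lexicographic clause. -/

theorem List.getD_mem_of_lt {α : Type*} {l : List α} {d : α} {i : ℕ} (h : i < l.length) :
    l.getD i d ∈ l := by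
  rw [List.getD_eq_getElem l d h]
  exact List.getElem_mem h

theorem List.forall_mem_of_forall_getD {α : Type*} {l : List α} {d : α} {p : α → Prop}
    (h : ∀ i, i < l.length → p (l.getD i d)) : ∀ x ∈ l, p x := by
  intro x hx
  obtain ⟨i, hi, rfl⟩ := List.getElem_of_mem hx
  simpa only [List.getD_eq_getElem l d hi] using h i hi

section

variable {V C D : Type} [Inhabited C] {precLe : D → D → Prop} {nu : D → ℕ → Bool}

theorem Lpo.of_lt1 {s t : Tm V C D} (h : Lt1 precLe nu s t) : Lpo precLe s t := by
  induction h with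
  | succ_eq c t => exact .succ_eq c t
  | succ_lt c _ ih => exact .succ_lt c ih
  | cons_left c _ ih => exact .succ_below c ih
  | arg_eq f ts i hi _ => exact .arg_eq f ts (List.getD_mem_of_lt hi)
  | arg_lt f ts i hi _ _ ih => exact .arg_lt f ts (List.getD_mem_of_lt hi) ih
  | prec hgf _ ih => exact .prec hgf ih

theorem Lpo.fn_of_eq_or_lt1_getD {s : Tm V C D} {f : D} {ts : List (Tm V C D)} {j : ℕ}
    (hj : j < ts.length) (h : s = ts.getD j dflt ∨ Lt1 precLe nu s (ts.getD j dflt)) :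
    Lpo precLe s (.fn f ts) := by
  rcases h with rfl | hlt
  · exact .arg_eq f ts (List.getD_mem_of_lt hj)
  · exact .arg_lt f ts (List.getD_mem_of_lt hj) (.of_lt1 hlt)

end

theorem stmt_9_general {V C D : Type} [Inhabited C] (precLe : D → D → Prop)
    (nu : D → ℕ → Bool) (s t : Tm V C D) (h : Lt0 precLe nu s t) :
    Lpo precLe s t := by
  induction h with
  | succ_eq c t => exact .succ_eq c t
  | succ_lt c _ ih => exact .succ_lt c ih
  | arg_eq f ts i hi => exact .arg_eq f ts (List.getD_mem_of_lt hi)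
  | arg_lt f ts i hi _ ih => exact .arg_lt f ts (List.getD_mem_of_lt hi) ih
  | cons_left c _ ih => exact .succ_below c ih
  | @prec g f ss ts hgf hval1 _ ihval0 =>
    refine .prec hgf (List.forall_mem_of_forall_getD (d := dflt) fun i hi => ?_)
    cases hnu : nu g i with
    | true => exact .of_lt1 (hval1 i hi hnu)
    | false => exact ihval0 i hi hnu
  | @lex g f ss ts p heq hlen hp _ hpre hpLt hval1 _ _ ihval0 =>
    refine .lex p heq hlen hp hpre (.of_lt1 hpLt) fun j hpj hj => ?_
    cases hnu : nu f j with
    | true => exact .fn_of_eq_or_lt1_getD hj (hval1 j hpj hj hnu)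
    | false => exact ihval0 j hpj hj hnu

/-- The ordering `≺₀` is a subrelation of the lexicographic path ordering
`≺_lpo` induced by the same precedence: if `s ≺₀ t` then `s ≺_lpo t`. -/
theorem stmt_9 {V C D : Type} [Inhabited C] (precLe : D → D → Prop)
    (htrans : Transitive precLe) (htot : ∀ f g, precLe f g ∨ precLe g f)
    (nu : D → ℕ → Bool) (s t : Tm V C D) (h : Lt0 precLe nu s t) :
    Lpo precLe s t :=
  stmt_9_general precLe nu s t h
end

section
/- For all d ≥ 2, k, X ≥ d, and natural numbers m < d, we have F_k^[m](X) + F_{k+1}(X−1) < F_{k+1}(X), where F^[m] denotes m-fold iteration. -/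
/-!
Unfolding the iteration gives `F d k X = X ^ e` with `e = d ^ d ^ k`, so `F d (k + 1) X = X ^ e ^ d`
and `(F d k)^[m] X = X ^ e ^ m`. Since `e ^ m + 1 < e ^ d`, the first summand is at most
`X ^ (e ^ d - 1)`, and `X ^ (N - 1) + (X - 1) ^ N ≤ X ^ N` by expanding `X ^ N = X * X ^ (N - 1)`.
-/

/-- The iterated polynomials: `F d 0 X = X ^ d` and `F d (k+1) = (F d k)` iterated `d` times. -/
def F (d : ℕ) : ℕ → ℕ → ℕ
  | 0 => fun X => X ^ d
  | k + 1 => (F d k)^[d]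

theorem F_eq_pow (d k : ℕ) : F d k = (· ^ d ^ d ^ k) := by
  induction k with
  | zero => funext X; simp [F]
  | succ k ih =>
    funext X
    rw [F, ih, pow_iterate, ← pow_mul, ← pow_succ]

theorem pow_succ_add_pow_le {R : Type*} [CommSemiring R] [PartialOrder R] [IsOrderedRing R]
    {a : R} (ha : 0 ≤ a) (n : ℕ) : a ^ (n + 1) + (a + 1) ^ n ≤ (a + 1) ^ (n + 1) :=
  calc a ^ (n + 1) + (a + 1) ^ n = a * a ^ n + (a + 1) ^ n := by rw [pow_succ']
    _ ≤ a * (a + 1) ^ n + (a + 1) ^ n := by gcongr; exact le_add_of_nonneg_right zero_le_one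
    _ = (a + 1) ^ (n + 1) := by ring

theorem Nat.pow_add_one_lt_pow {a m n : ℕ} (ha : 2 ≤ a) (hn : 2 ≤ n) (hm : m < n) :
    a ^ m + 1 < a ^ n := by
  have hm_le : a ^ m ≤ a ^ (n - 1) := Nat.pow_le_pow_right (by omega) (by omega)
  have htwo : 2 ≤ a ^ (n - 1) := ha.trans (Nat.le_self_pow (by omega) a)
  calc a ^ m + 1 < a ^ (n - 1) + a ^ (n - 1) := by omega
    _ = 2 * a ^ (n - 1) := by ring
    _ ≤ a * a ^ (n - 1) := by gcongr
    _ = a ^ n := by rw [← pow_succ']; congr 1; omega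

theorem stmt_16 (d : ℕ) (hd : 2 ≤ d) (k X m : ℕ) (hX : d ≤ X) (hm : m < d) :
    (F d k)^[m] X + F d (k + 1) (X - 1) < F d (k + 1) X := by
  obtain ⟨Y, rfl⟩ : ∃ Y, X = Y + 1 := ⟨X - 1, by omega⟩
  set e := d ^ d ^ k
  have he : 2 ≤ e := hd.trans (Nat.le_self_pow (by positivity) d)
  have hexp : e ^ m + 1 < e ^ d := Nat.pow_add_one_lt_pow he hd hm
  obtain ⟨n, hn⟩ : ∃ n, e ^ d = n + 1 := ⟨e ^ d - 1, by omega⟩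
  have hF : d ^ d ^ (k + 1) = n + 1 := by rw [← hn, ← pow_mul, ← pow_succ]
  simp only [F_eq_pow, pow_iterate, Nat.add_sub_cancel, hF]
  calc (Y + 1) ^ e ^ m + Y ^ (n + 1) < (Y + 1) ^ n + Y ^ (n + 1) := by
        gcongr <;> omega
    _ ≤ (Y + 1) ^ (n + 1) := by rw [add_comm]; exact pow_succ_add_pow_le Y.zero_le n
end
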